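/- arXiv:1512.01349 — 6 statements merged into one kernel-verified Lean document; each statement's English description precedes it below -/
import Mathlib

section
/- Let F be a field and Q an F-quaternion algebra (a central simple F-algebra of F-dimension 4). Let v ∈ Q with v ∉ F·1 and v·v = b·1 for some b ∈ F with b ≠ 0. Then there exist u ∈ Q and a ∈ F with 1 + 4a ≠ 0 such that u·v = v·(1 − u) and u·u − u = a·1; moreover the four elements (1, u, v, u·v) form an F-basis of Q. -/
/-!
Conjugation by `v` is an involution of `Q`, and `u * v = v * (1 - u)` says that it maps `u` to
`1 - u`. If `2 ≠ 0` we take `u = (1 + w) / 2` for some `w` anticommuting with `v`: when `b` is not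
a square, `w = v x - x v` for any `x` not commuting with `v`; when `b = β²`, `w = p + q` with
`p ∈ (v - β) Q (v + β)` and `q ∈ (v + β) Q (v - β)` nonzero, which exist because `Q` is prime.
If `2 = 0`, the map `x ↦ x v + v x` squares to zero and its kernel is the centralizer of `v`,
which has dimension at most 2; so its image is the whole kernel, which contains `v`.

In all cases `w = 2u - 1` satisfies `w s = 0 → s = 0` for `s ∈ F[v]`. Conjugating a linear
relation between `1, u, v, uv` by `v` and subtracting shows that the four elements are
independent, hence a basis. Then `u² - u` commutes with `u` and `v`, so it is a scalar `a`, and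
`(2u - 1)² = 1 + 4a` cannot vanish since `w Q w ≠ 0` in a simple ring.
-/

open Module

section SimpleRing

variable {R : Type*} [Ring R] [IsSimpleRing R]

theorem AddSubgroup.eq_top_of_mul_mul_mem {x : R} (hx : x ≠ 0) (M : AddSubgroup R)
    (hM : ∀ a b : R, a * x * b ∈ M) : M = ⊤ := by
  have key : ∀ z ∈ TwoSidedIdeal.span {x}, ∀ a b : R, a * z * b ∈ M := by
    intro z hz
    induction hz using TwoSidedIdeal.span_induction with
    | mem y hy => rw [Set.mem_singleton_iff.mp hy]; exact hM
    | zero => simp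
    | add y z _ _ hy hz =>
      intro a b; rw [mul_add, add_mul]; exact M.add_mem (hy a b) (hz a b)
    | neg y _ hy => intro a b; simpa using M.neg_mem (hy a b)
    | left_absorb c y _ hy => intro a b; simpa only [mul_assoc] using hy (a * c) b
    | right_absorb c y _ hy => intro a b; simpa only [mul_assoc] using hy a (c * b)
  have h1 := IsSimpleRing.one_mem_of_ne_zero_mem _ hx
    (TwoSidedIdeal.subset_span (Set.mem_singleton x))
  exact eq_top_iff.mpr fun q _ => by simpa using key 1 h1 q 1

theorem IsSimpleRing.exists_mul_mul_ne_zero {a c : R} (ha : a ≠ 0) (hc : c ≠ 0) :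
    ∃ q, a * q * c ≠ 0 := by
  by_contra! h
  have hker : (AddMonoidHom.mulLeft a).ker = ⊤ :=
    AddSubgroup.eq_top_of_mul_mul_mem hc _ fun p r => by simp [← mul_assoc, h]
  have h1 : (1 : R) ∈ (AddMonoidHom.mulLeft a).ker := hker ▸ AddSubgroup.mem_top 1
  exact ha (by simpa using h1)

end SimpleRing

section Algebra

variable {F Q : Type*} [Field F] [Ring Q] [Algebra F Q]

/-- Every `a` is `c + α x₀` with `δ c = 0`; such `c` multiply `F ∙ δ x₀` into itself on both
sides, and `δ (x₀ * x₀) ∈ F ∙ δ x₀` expresses `δ x₀ * x₀` through `x₀ * δ x₀`. -/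
theorem mul_apply_mul_mem_span_of_range_eq_span_singleton {δ : Q →ₗ[F] Q}
    (hδ : ∀ x y, δ (x * y) = δ x * y + x * δ y) {x₀ : Q}
    (hrange : LinearMap.range δ = F ∙ δ x₀) (a b : Q) :
    a * δ x₀ * b ∈ Submodule.span F (Set.range ![δ x₀, x₀ * δ x₀, x₀ * δ x₀ * x₀]) := by
  set d := δ x₀
  have hmem : ∀ x, δ x ∈ F ∙ d := fun x => hrange ▸ LinearMap.mem_range_self δ x
  have hCd : ∀ c, δ c = 0 → c * d ∈ F ∙ d := fun c hc => by
    simpa [hδ, hc] using hmem (c * x₀)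
  have hdC : ∀ c, δ c = 0 → d * c ∈ F ∙ d := fun c hc => by
    simpa [hδ, hc] using hmem (x₀ * c)
  have hdecomp : ∀ a, ∃ α : F, δ (a - α • x₀) = 0 := fun a => by
    obtain ⟨α, hα⟩ := Submodule.mem_span_singleton.mp (hmem a)
    exact ⟨α, by rw [map_sub, map_smul, ← hα, sub_self]⟩
  set M := Submodule.span F (Set.range ![d, x₀ * d, x₀ * d * x₀])
  have hdM : d ∈ M := Submodule.subset_span ⟨0, rfl⟩
  have hxdM : x₀ * d ∈ M := Submodule.subset_span ⟨1, rfl⟩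
  have hxdxM : x₀ * d * x₀ ∈ M := Submodule.subset_span ⟨2, rfl⟩
  have hdxM : d * x₀ ∈ M := by
    obtain ⟨κ, hκ⟩ := Submodule.mem_span_singleton.mp (hmem (x₀ * x₀))
    rw [hδ] at hκ
    have := M.sub_mem (hκ ▸ M.smul_mem κ hdM) hxdM
    rwa [add_sub_cancel_right] at this
  obtain ⟨α, hα⟩ := hdecomp a
  obtain ⟨α', hα'⟩ := hdecomp b
  obtain ⟨κ, hκ⟩ := Submodule.mem_span_singleton.mp (hCd _ hα)
  obtain ⟨κ', hκ'⟩ := Submodule.mem_span_singleton.mp (hdC _ hα')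
  set c := a - α • x₀
  set c' := b - α' • x₀
  have hab : a * d * b = c * d * c' + α' • (c * d * x₀) + α • (x₀ * (d * c'))
      + (α' * α) • (x₀ * d * x₀) := by
    rw [show a = c + α • x₀ by simp [c], show b = c' + α' • x₀ by simp [c']]
    simp only [add_mul, mul_add, smul_mul_assoc, mul_smul_comm, smul_add, smul_smul, mul_assoc]
    abel
  rw [hab, ← hκ, smul_mul_assoc, smul_mul_assoc, ← hκ', mul_smul_comm]
  exact M.add_mem (M.add_mem (M.add_mem (M.smul_mem _ (M.smul_mem _ hdM))
    (M.smul_mem _ (M.smul_mem _ hdxM))) (M.smul_mem _ (M.smul_mem _ hxdM))) (M.smul_mem _ hxdxM)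

/-- If the inner derivation `[v, ·]` had rank at most one, the two-sided ideal generated by its
image would have dimension at most 3. -/
theorem finrank_centralizer_add_two_le [IsSimpleRing Q] (h4 : 4 ≤ finrank F Q) {v : Q}
    (hv : ∃ x, v * x ≠ x * v) :
    finrank F (Subalgebra.centralizer F {v}) + 2 ≤ finrank F Q := by
  have : FiniteDimensional F Q := Module.finite_of_finrank_pos (by omega)
  set δ : Q →ₗ[F] Q := LinearMap.mulLeft F v - LinearMap.mulRight F v
  have hδ : ∀ x, δ x = v * x - x * v := fun _ => rfl
  have hker : (Subalgebra.centralizer F {v}).toSubmodule = LinearMap.ker δ := by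
    ext x; simp [Subalgebra.mem_centralizer_iff, hδ, sub_eq_zero]
  have hrank := δ.finrank_range_add_finrank_ker
  rw [← hker, Subalgebra.finrank_toSubmodule] at hrank
  by_contra! hlt
  obtain ⟨x₀, hx₀⟩ := hv
  have hd : δ x₀ ≠ 0 := sub_ne_zero.mpr hx₀
  have hrange : LinearMap.range δ = F ∙ δ x₀ := by
    refine (Submodule.eq_of_le_of_finrank_le ?_ ?_).symm
    · exact (Submodule.span_singleton_le_iff_mem _ _).mpr (LinearMap.mem_range_self δ x₀)
    · rw [finrank_span_singleton hd]; omega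
  have hM := mul_apply_mul_mem_span_of_range_eq_span_singleton
    (fun x y => by simp only [hδ]; noncomm_ring) hrange
  set M := Submodule.span F (Set.range ![δ x₀, x₀ * δ x₀, x₀ * δ x₀ * x₀])
  have htop := Submodule.toAddSubgroup_eq_top.mp
    (AddSubgroup.eq_top_of_mul_mul_mem hd M.toAddSubgroup hM)
  have h3 : finrank F M ≤ 3 :=
    (finrank_range_le_card (R := F) ![δ x₀, x₀ * δ x₀, x₀ * δ x₀ * x₀]).trans (by simp)
  rw [htop, finrank_top] at h3
  omega

theorem exists_mul_ne_mul_of_notMem_range [Algebra.IsCentral F Q] {v : Q}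
    (hv : v ∉ Set.range (algebraMap F Q)) : ∃ x, v * x ≠ x * v := by
  by_contra! h
  exact hv (Algebra.mem_bot.mp (Algebra.IsCentral.out (Subalgebra.mem_center_iff.mpr
    fun x => (h x).symm)))

theorem linearIndependent_one_of_notMem_range [Nontrivial Q] {v : Q}
    (hv : v ∉ Set.range (algebraMap F Q)) : LinearIndependent F ![1, v] := by
  refine LinearIndependent.pair_iff.mpr fun s t hst => ?_
  have ht : t = 0 := by
    by_contra ht
    refine hv ⟨-(s / t), ?_⟩
    rw [Algebra.algebraMap_eq_smul_one, ← inv_smul_smul₀ ht v, eq_neg_of_add_eq_zero_right hst]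
    module
  subst ht
  simpa using hst

theorem exists_mul_add_mul_eq_of_two_eq_zero [IsSimpleRing Q] (hdim : finrank F Q = 4)
    (h2 : (2 : F) = 0) {v : Q} (hv : ∃ x, v * x ≠ x * v) {b : F}
    (hvv : v * v = algebraMap F Q b) : ∃ u, u * v + v * u = v := by
  have : FiniteDimensional F Q := Module.finite_of_finrank_pos (by omega)
  have h2Q : (2 : Q) = 0 := by rw [← map_ofNat (algebraMap F Q) 2, h2, map_zero]
  have hneg : ∀ y : Q, -y = y := fun y => by
    rw [neg_eq_iff_add_eq_zero, ← two_mul, h2Q, zero_mul]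
  set T : Q →ₗ[F] Q := LinearMap.mulRight F v + LinearMap.mulLeft F v
  have hT : ∀ x, T x = x * v + v * x := fun _ => rfl
  have hker : (Subalgebra.centralizer F {v}).toSubmodule = LinearMap.ker T := by
    ext x
    simp [Subalgebra.mem_centralizer_iff, hT, add_eq_zero_iff_eq_neg, hneg, eq_comm]
  have hle : LinearMap.range T ≤ LinearMap.ker T := by
    rintro _ ⟨x, rfl⟩
    rw [LinearMap.mem_ker, hT, hT]
    calc (x * v + v * x) * v + v * (x * v + v * x)
        = 2 * (v * x * v) + x * (v * v) + (v * v) * x := by noncomm_ring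
      _ = 0 := by rw [h2Q, hvv, Algebra.commutes, zero_mul, zero_add, ← two_mul, h2Q, zero_mul]
  have hrank := T.finrank_range_add_finrank_ker
  have hC := finrank_centralizer_add_two_le (F := F) hdim.ge hv
  rw [← hker, Subalgebra.finrank_toSubmodule] at hrank
  have heq : LinearMap.range T = LinearMap.ker T := by
    refine Submodule.eq_of_le_of_finrank_le hle ?_
    rw [← hker, Subalgebra.finrank_toSubmodule]
    omega
  have hvker : v ∈ LinearMap.ker T := by
    rw [LinearMap.mem_ker, hT, ← two_mul, h2Q, zero_mul]
  exact (heq ▸ hvker : v ∈ LinearMap.range T)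

theorem exists_anticommuting_of_not_isSquare {v : Q} (hv : ∃ x, v * x ≠ x * v) {b : F}
    (hb : ¬IsSquare b) (hvv : v * v = algebraMap F Q b) :
    ∃ w, w * v = -(v * w) ∧ LinearIndependent F ![w, w * v] := by
  obtain ⟨x, hx⟩ := hv
  refine ⟨v * x - x * v, ?_, LinearIndependent.pair_iff.mpr fun s t hst => ?_⟩
  · calc (v * x - x * v) * v = v * x * v - x * (v * v) := by noncomm_ring
      _ = v * x * v - (v * v) * x := by rw [hvv, Algebra.commutes]
      _ = -(v * (v * x - x * v)) := by noncomm_ring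
  have hnorm : (s * s - t * t * b) • (v * x - x * v) = 0 := by
    calc (s * s - t * t * b) • (v * x - x * v)
        = (s • (v * x - x * v) + t • ((v * x - x * v) * v)) * (s • 1 - t • v) := by
          simp only [add_mul, mul_sub, smul_mul_assoc, mul_smul_comm, mul_one, mul_assoc, hvv,
            ← Algebra.commutes, ← Algebra.smul_def]
          module
      _ = 0 := by rw [hst, zero_mul]
  have hst' : s * s = t * t * b := by
    simpa [sub_eq_zero, sub_ne_zero.mpr hx] using hnorm
  have ht : t = 0 := by
    by_contra ht
    exact hb ⟨s / t, by field_simp; linear_combination hst'.symm⟩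
  subst ht
  exact ⟨by simpa using hst', rfl⟩

theorem linearIndependent_add_of_eigenvectors (h2 : (2 : F) ≠ 0) {v p q : Q} {β : F}
    (hβ : β ≠ 0) (hp : p ≠ 0) (hq : q ≠ 0) (hvp : v * p = -(β • p)) (hpv : p * v = β • p)
    (hvq : v * q = β • q) (hqv : q * v = -(β • q)) :
    LinearIndependent F ![p + q, (p + q) * v] := by
  refine LinearIndependent.pair_iff.mpr fun s t hst => ?_
  have hrel : (s + t * β) • p + (s - t * β) • q = 0 := by
    rw [← hst, add_mul, hpv, hqv]; module
  have hvrel := congrArg (v * ·) hrel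
  simp only [mul_add, mul_smul_comm, hvp, hvq, mul_zero] at hvrel
  have hp' : (2 * β * (s + t * β)) • p = 0 := by
    rw [show (2 * β * (s + t * β)) • p = β • ((s + t * β) • p + (s - t * β) • q)
      - ((s + t * β) • -(β • p) + (s - t * β) • β • q) by module, hrel, hvrel, smul_zero, sub_zero]
  have hq' : (2 * β * (s - t * β)) • q = 0 := by
    rw [show (2 * β * (s - t * β)) • q = β • ((s + t * β) • p + (s - t * β) • q)
      + ((s + t * β) • -(β • p) + (s - t * β) • β • q) by module, hrel, hvrel, smul_zero, add_zero]
  have hA : s + t * β = 0 := by simpa [hp, h2, hβ] using hp'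
  have hC : s - t * β = 0 := by simpa [hq, h2, hβ] using hq'
  have hs : s = 0 := by
    have : 2 * s = 0 := by linear_combination hA + hC
    simpa [h2] using this
  refine ⟨hs, ?_⟩
  have : t * β = 0 := by linear_combination hA - hs
  simpa [hβ] using this

theorem exists_anticommuting_of_sq_eq [IsSimpleRing Q] (h2 : (2 : F) ≠ 0) {v : Q}
    (hv : v ∉ Set.range (algebraMap F Q)) {β : F} (hβ : β ≠ 0)
    (hvv : v * v = algebraMap F Q (β * β)) :
    ∃ w, w * v = -(v * w) ∧ LinearIndependent F ![w, w * v] := by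
  set B := algebraMap F Q β
  have hBl : ∀ z, B * z = β • z := fun z => (Algebra.smul_def β z).symm
  have hBr : ∀ z, z * B = β • z := fun z => by rw [← Algebra.commutes, hBl]
  have hn : v - B ≠ 0 := sub_ne_zero.mpr fun h => hv ⟨β, h.symm⟩
  have hm : v + B ≠ 0 := fun h => hv ⟨-β, by rw [map_neg, ← add_eq_zero_iff_neg_eq'.mp h]⟩
  have hmn : (v + B) * (v - B) = 0 := by
    calc (v + B) * (v - B) = v * v - B * B + (B * v - v * B) := by noncomm_ring
      _ = 0 := by rw [Algebra.commutes β v, hvv, map_mul, sub_self, sub_self, add_zero]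
  have hnm : (v - B) * (v + B) = 0 := by
    calc (v - B) * (v + B) = v * v - B * B - (B * v - v * B) := by noncomm_ring
      _ = 0 := by rw [Algebra.commutes β v, hvv, map_mul, sub_self, sub_self, sub_zero]
  obtain ⟨x, hx⟩ := IsSimpleRing.exists_mul_mul_ne_zero hn hm
  obtain ⟨y, hy⟩ := IsSimpleRing.exists_mul_mul_ne_zero hm hn
  set p := (v - B) * x * (v + B)
  set q := (v + B) * y * (v - B)
  have hvp : v * p = -(β • p) := eq_neg_of_add_eq_zero_left <| by
    rw [← hBl, ← add_mul]; simp only [p, ← mul_assoc, hmn, zero_mul]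
  have hpv : p * v = β • p := by
    rw [← hBr, ← sub_eq_zero, ← mul_sub]; simp only [p, mul_assoc, hmn, mul_zero]
  have hvq : v * q = β • q := by
    rw [← hBl, ← sub_eq_zero, ← sub_mul]; simp only [q, ← mul_assoc, hnm, zero_mul]
  have hqv : q * v = -(β • q) := eq_neg_of_add_eq_zero_left <| by
    rw [← hBr, ← mul_add]; simp only [q, mul_assoc, hnm, mul_zero]
  refine ⟨p + q, ?_, linearIndependent_add_of_eigenvectors h2 hβ hx hy hvp hpv hvq hqv⟩
  rw [add_mul, mul_add, hpv, hqv, hvp, hvq]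
  abel

theorem exists_mul_eq_mul_one_sub [IsSimpleRing Q] [Algebra.IsCentral F Q]
    (hdim : finrank F Q = 4) {v : Q} (hv : v ∉ Set.range (algebraMap F Q)) {b : F} (hb : b ≠ 0)
    (hvv : v * v = algebraMap F Q b) :
    ∃ u, u * v = v * (1 - u) ∧ LinearIndependent F ![2 * u - 1, (2 * u - 1) * v] := by
  by_cases h2 : (2 : F) = 0
  · have h2Q : (2 : Q) = 0 := by rw [← map_ofNat (algebraMap F Q) 2, h2, map_zero]
    obtain ⟨u, hu⟩ := exists_mul_add_mul_eq_of_two_eq_zero hdim h2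
      (exists_mul_ne_mul_of_notMem_range hv) hvv
    refine ⟨u, by rw [mul_sub, mul_one, eq_sub_iff_add_eq, hu], ?_⟩
    have h1v : LinearIndependent F ![1, v] := linearIndependent_one_of_notMem_range hv
    rw [h2Q, zero_mul, zero_sub, neg_one_mul]
    exact LinearIndependent.pair_iff.mpr fun s t hst => LinearIndependent.pair_iff.mp h1v s t
      (by rwa [smul_neg, smul_neg, ← neg_add, neg_eq_zero] at hst)
  obtain ⟨w, hwv, hw⟩ : ∃ w, w * v = -(v * w) ∧ LinearIndependent F ![w, w * v] := by
    by_cases hsq : IsSquare b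
    · obtain ⟨β, rfl⟩ := hsq
      exact exists_anticommuting_of_sq_eq h2 hv (by rintro rfl; simp at hb) hvv
    · exact exists_anticommuting_of_not_isSquare (exists_mul_ne_mul_of_notMem_range hv) hsq hvv
  have hu : 2 * ((2 : F)⁻¹ • (1 + w)) - 1 = w := by
    rw [← map_ofNat (algebraMap F Q) 2, ← Algebra.smul_def, smul_smul, mul_inv_cancel₀ h2,
      one_smul, add_sub_cancel_left]
  refine ⟨(2 : F)⁻¹ • (1 + w), ?_, by rwa [hu]⟩
  simp only [smul_mul_assoc, mul_smul_comm, add_mul, mul_sub, mul_add, one_mul, mul_one, hwv]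
  match_scalars <;> field_simp
  norm_num

theorem linearIndependent_of_mul_eq_mul_one_sub {u v : Q} (hv : LinearIndependent F ![1, v])
    (hvu : IsUnit v) (huv : u * v = v * (1 - u))
    (hw : LinearIndependent F ![2 * u - 1, (2 * u - 1) * v]) :
    LinearIndependent F ![1, u, v, u * v] := by
  rw [Fintype.linearIndependent_iff]
  intro c hc
  simp only [Fin.sum_univ_four, Matrix.cons_val_zero, Matrix.cons_val_one, Matrix.head_cons,
    Matrix.cons_val_two, Matrix.cons_val_three, Matrix.tail_cons] at hc
  have hvu' : v * u = (1 - u) * v := by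
    rw [sub_mul, one_mul, huv, mul_sub, mul_one, sub_sub_cancel]
  have hconj : v * (c 0 • 1 + c 1 • u + c 2 • v + c 3 • (u * v))
      = (c 0 • 1 + c 1 • (1 - u) + c 2 • v + c 3 • ((1 - u) * v)) * v := by
    simp only [mul_add, add_mul, mul_smul_comm, smul_mul_assoc, mul_one, one_mul, ← mul_assoc,
      hvu']
  rw [hc, mul_zero, eq_comm, hvu.mul_left_eq_zero] at hconj
  obtain ⟨h1, h3⟩ := LinearIndependent.pair_iff.mp hw (c 1) (c 3) <| by
    calc c 1 • (2 * u - 1) + c 3 • ((2 * u - 1) * v)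
        = (c 0 • 1 + c 1 • u + c 2 • v + c 3 • (u * v))
          - (c 0 • 1 + c 1 • (1 - u) + c 2 • v + c 3 • ((1 - u) * v)) := by
          simp only [two_mul, sub_mul, add_mul, one_mul]; module
      _ = 0 := by rw [hc, hconj, sub_zero]
  rw [h1, h3, zero_smul, zero_smul, add_zero, add_zero] at hc
  obtain ⟨h0, h2⟩ := LinearIndependent.pair_iff.mp hv (c 0) (c 2) hc
  intro i
  fin_cases i <;> assumption

theorem exists_algebraMap_eq_mul_self_sub [Algebra.IsCentral F Q] {u v : Q}
    (hspan : Submodule.span F {1, u, v, u * v} = ⊤) (huv : u * v = v * (1 - u)) :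
    ∃ a, u * u - u = algebraMap F Q a := by
  have hvu : v * u = (1 - u) * v := by
    rw [sub_mul, one_mul, huv, mul_sub, mul_one, sub_sub_cancel]
  set C := Subalgebra.centralizer F {u * u - u}
  have huC : u ∈ C := by
    rw [Subalgebra.mem_centralizer_iff]; rintro _ rfl; noncomm_ring
  have hvC : v ∈ C := by
    rw [Subalgebra.mem_centralizer_iff]; rintro _ rfl
    rw [mul_sub v, ← mul_assoc, hvu, mul_assoc, hvu]; noncomm_ring
  have hsub : ({1, u, v, u * v} : Set Q) ⊆ C := by
    simp [Set.insert_subset_iff, huC, hvC, C.one_mem, C.mul_mem huC hvC]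
  have hcen : u * u - u ∈ Subalgebra.center F Q := Subalgebra.mem_center_iff.mpr fun x => by
    have hx : x ∈ Subalgebra.toSubmodule C :=
      Submodule.span_le.mpr hsub (hspan ▸ Submodule.mem_top)
    exact ((Subalgebra.mem_centralizer_iff F).mp hx _ rfl).symm
  obtain ⟨a, ha⟩ := (Algebra.IsCentral.mem_center_iff F).mp hcen
  exact ⟨a, ha⟩

theorem one_add_four_mul_ne_zero_of_mul_self_sub_eq [IsSimpleRing Q] {u v : Q} {a : F}
    (hspan : Submodule.span F {1, u, v, u * v} = ⊤) (huv : u * v = v * (1 - u))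
    (ha : u * u - u = algebraMap F Q a) (hw : 2 * u - 1 ≠ 0) : 1 + 4 * a ≠ 0 := by
  intro h
  have hww : (2 * u - 1) * (2 * u - 1) = 0 := by
    calc (2 * u - 1) * (2 * u - 1) = 4 * (u * u - u) + 1 := by noncomm_ring
      _ = algebraMap F Q (1 + 4 * a) := by
        rw [ha, map_add, map_mul, map_one, map_ofNat, add_comm]
      _ = 0 := by rw [h, map_zero]
  have hwu : (2 * u - 1) * u = u * (2 * u - 1) := by noncomm_ring
  have hwv : (2 * u - 1) * v = -(v * (2 * u - 1)) := by
    calc (2 * u - 1) * v = 2 * (u * v) - v := by noncomm_ring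
      _ = -(v * (2 * u - 1)) := by rw [huv]; noncomm_ring
  set w := 2 * u - 1
  have hker : Submodule.span F {1, u, v, u * v} ≤
      LinearMap.ker (LinearMap.mulLeft F w ∘ₗ LinearMap.mulRight F w) := by
    rw [Submodule.span_le]
    simp only [Set.insert_subset_iff, Set.singleton_subset_iff, SetLike.mem_coe,
      LinearMap.mem_ker, LinearMap.comp_apply, LinearMap.mulRight_apply, LinearMap.mulLeft_apply]
    refine ⟨by rw [one_mul, hww], ?_, ?_, ?_⟩
    · rw [← mul_assoc, hwu, mul_assoc, hww, mul_zero]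
    · rw [← mul_assoc, hwv, neg_mul, mul_assoc, hww, mul_zero, neg_zero]
    · rw [← mul_assoc, ← mul_assoc, hwu, mul_assoc u, hwv, mul_neg, neg_mul, mul_assoc,
        mul_assoc, hww, mul_zero, mul_zero, neg_zero]
  obtain ⟨q, hq⟩ := IsSimpleRing.exists_mul_mul_ne_zero hw hw
  exact hq (by simpa [mul_assoc] using hker (hspan ▸ Submodule.mem_top (x := q)))

end Algebra

/-- In an `F`-quaternion algebra `Q` (a central simple `F`-algebra of dimension 4), given
`v ∈ Q \ F` with `v² = b ∈ F^×`, there exist `u ∈ Q` and `a ∈ F` with `1 + 4a ≠ 0` such that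
`uv = v(1 - u)` and `u² - u = a`; moreover `(1, u, v, uv)` is an `F`-basis of `Q`. -/
theorem quaternion_basis_completion
    (F Q : Type*) [Field F] [Ring Q] [Algebra F Q]
    [Algebra.IsCentral F Q] [IsSimpleRing Q]
    (hdim : Module.finrank F Q = 4)
    (v : Q) (hv : v ∉ Set.range (algebraMap F Q))
    (b : F) (hb : b ≠ 0) (hvv : v * v = algebraMap F Q b) :
    ∃ (u : Q) (a : F), 1 + 4 * a ≠ 0 ∧
      u * v = v * (1 - u) ∧
      u * u - u = algebraMap F Q a ∧
      LinearIndependent F ![1, u, v, u * v] ∧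
      Submodule.span F {(1 : Q), u, v, u * v} = ⊤ := by
  obtain ⟨u, huv, hw⟩ := exists_mul_eq_mul_one_sub hdim hv hb hvv
  have hvunit : IsUnit v := by
    have hinv : b⁻¹ • (v * v) = 1 := by
      rw [hvv, Algebra.smul_def, ← map_mul, inv_mul_cancel₀ hb, map_one]
    exact isUnit_iff_exists.mpr ⟨b⁻¹ • v, by rwa [mul_smul_comm], by rwa [smul_mul_assoc]⟩
  have hind := linearIndependent_of_mul_eq_mul_one_sub
    (linearIndependent_one_of_notMem_range hv) hvunit huv hw
  have hspan : Submodule.span F {(1 : Q), u, v, u * v} = ⊤ := by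
    have := hind.span_eq_top_of_card_eq_finrank (by simp [hdim])
    simpa only [Matrix.range_cons, Matrix.range_empty, Set.union_empty, Set.singleton_union]
      using this
  obtain ⟨a, ha⟩ := exists_algebraMap_eq_mul_self_sub hspan huv
  exact ⟨u, a, one_add_four_mul_ne_zero_of_mul_self_sub_eq hspan huv ha (hw.ne_zero 0), huv, ha,
    hind, hspan⟩
end

section
/- Let F be a field of characteristic 2 and Q an F-quaternion algebra (a central simple F-algebra of F-dimension 4). Let v ∈ Q with v ∉ F·1 and v·v = b·1 for some b ∈ F with b ≠ 0. Consider the F-linear map δ : Q → Q defined by δ(x) = x·v + v·x. Then the kernel of δ equals the F-linear span of {1, v}, and the image of δ also equals the F-linear span of {1, v}. -/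
/-! In characteristic 2, `δ x = x v + v x` is the inner derivation `ad v`, and
`δ² = ad (v²) = 0` because `v²` is central; so `range δ ≤ ker δ` and `span {1, v} ≤ ker δ`.
By rank–nullity in dimension 4 it remains to see `rank δ ≥ 2`. Rank 0 would make `v` central.
For rank 1, say `range δ = F ∙ y` with `y = δ x`, the Leibniz rule gives
`y a = δ (x a) - x δ a ∈ Q y` and `a y = δ (a x) - δ a x ∈ span {y, y x}`: so `Q y` is a
nonzero two-sided ideal of dimension at most 2, contradicting simplicity. -/

open Module LinearMap

theorem IsSimpleRing.span_singleton_eq_top_of_mul_mem {A : Type*} [Ring A] [IsSimpleRing A]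
    {y : A} (hy : y ≠ 0) (hright : ∀ a, y * a ∈ Ideal.span {y}) : Ideal.span {y} = ⊤ := by
  have : (Ideal.span {y}).IsTwoSided := ⟨fun b ha => by
    obtain ⟨c, rfl⟩ := Ideal.mem_span_singleton'.1 ha
    rw [mul_assoc]
    exact Ideal.mul_mem_left _ c (hright b)⟩
  refine ((isSimpleRing_iff_isTwoSided_imp.1 ‹_›).2 _ this).resolve_left fun hbot => hy ?_
  rw [← Ideal.mem_bot, ← hbot]
  exact Ideal.mem_span_singleton_self y

theorem finrank_range_ne_one_of_leibniz {F A : Type*} [Field F] [Ring A] [Algebra F A]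
    [IsSimpleRing A] (hA : 2 < finrank F A) (D : A →ₗ[F] A)
    (hD : ∀ a b, D (a * b) = a * D b + D a * b) : finrank F (range D) ≠ 1 := by
  intro h
  have : FiniteDimensional F A := Module.finite_of_finrank_pos (by omega)
  obtain ⟨y, ⟨x, rfl⟩, hy, hle⟩ :=
    (rank_submodule_eq_one_iff _).1 (rank_eq_one_iff_finrank_eq_one.2 h)
  have hD_smul (a : A) : ∃ c : F, c • D x = D a :=
    Submodule.mem_span_singleton.1 (hle ⟨a, rfl⟩)
  have hleft (a : A) : a * D x ∈ Submodule.span F {D x, D x * x} := by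
    obtain ⟨c, hc⟩ := hD_smul (a * x)
    obtain ⟨d, hd⟩ := hD_smul a
    rw [hD, ← hd] at hc
    refine Submodule.mem_span_pair.2 ⟨c, -d, ?_⟩
    rw [neg_smul, ← smul_mul_assoc, hc]
    abel
  have hright (a : A) : D x * a ∈ Ideal.span {D x} := by
    obtain ⟨c, hc⟩ := hD_smul (x * a)
    obtain ⟨d, hd⟩ := hD_smul a
    rw [hD, ← hd] at hc
    refine Ideal.mem_span_singleton'.2 ⟨algebraMap F A c - d • x, ?_⟩
    rw [sub_mul, ← Algebra.smul_def, smul_mul_assoc, ← mul_smul_comm, hc]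
    abel
  have hideal := IsSimpleRing.span_singleton_eq_top_of_mul_mem hy hright
  have htop : (⊤ : Submodule F A) ≤ Submodule.span F {D x, D x * x} := fun z _ => by
    obtain ⟨a, rfl⟩ := Ideal.mem_span_singleton'.1 (hideal.symm ▸ Submodule.mem_top (x := z))
    exact hleft a
  classical
  have hpair := finrank_span_finset_le_card (R := F) ({D x, D x * x} : Finset A)
  rw [Finset.coe_pair] at hpair
  have := (finrank_top F A).symm.trans_le ((Submodule.finrank_mono htop).trans hpair)
  have := Finset.card_le_two (a := D x) (b := D x * x)
  omega

section CharTwo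

variable {R A : Type*} [CommSemiring R] [Ring A] [CharP A 2] [Algebra R A]

theorem mulRight_add_mulLeft_mul (v a b : A) :
    (mulRight R v + mulLeft R v) (a * b) =
      a * (mulRight R v + mulLeft R v) b + (mulRight R v + mulLeft R v) a * b := by
  simp only [LinearMap.add_apply, mulRight_apply, mulLeft_apply, mul_add, add_mul, ← mul_assoc]
  rw [← add_assoc, add_assoc (a * b * v), CharTwo.add_self_eq_zero, add_zero]

theorem mulRight_add_mulLeft_comp_self_eq_zero {v : A} {b : R}
    (hvv : v * v = algebraMap R A b) :
    (mulRight R v + mulLeft R v) ∘ₗ (mulRight R v + mulLeft R v) = 0 := by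
  ext x
  simp only [comp_apply, LinearMap.add_apply, mulRight_apply, mulLeft_apply, mul_add, add_mul,
    ← mul_assoc, LinearMap.zero_apply]
  rw [mul_assoc x, hvv, Algebra.commutes, add_comm (v * x * v), CharTwo.add_self_eq_zero]

theorem mulRight_add_mulLeft_ne_zero [Algebra.IsCentral R A] {v : A}
    (hv : v ∉ Set.range (algebraMap R A)) : mulRight R v + mulLeft R v ≠ 0 := by
  intro h
  obtain ⟨a, rfl⟩ := (Algebra.IsCentral.mem_center_iff R).1 <|
    Subalgebra.mem_center_iff.2 fun x => CharTwo.add_eq_zero.1 (LinearMap.congr_fun h x)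
  exact hv ⟨a, rfl⟩

end CharTwo

theorem finrank_span_one_pair_eq_two {F A : Type*} [Field F] [Ring A] [Algebra F A]
    [Nontrivial A] {v : A} (hv : v ∉ Set.range (algebraMap F A)) :
    finrank F (Submodule.span F {1, v}) = 2 := by
  have hind : LinearIndependent F ![(1 : A), v] :=
    (LinearIndependent.pair_iff' one_ne_zero).2 fun a h =>
      hv ⟨a, by rw [Algebra.algebraMap_eq_smul_one, h]⟩
  rw [show ({1, v} : Set A) = Set.range ![(1 : A), v] by simp [Set.pair_comm],
    finrank_span_eq_card hind, Fintype.card_fin]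

theorem kernel_image_of_commutator_map_general
    (F Q : Type*) [Field F] [CharP F 2] [Ring Q] [Algebra F Q]
    [Algebra.IsCentral F Q] [IsSimpleRing Q]
    (hdim : Module.finrank F Q = 4)
    (v : Q) (hv : v ∉ Set.range (algebraMap F Q))
    (b : F) (hvv : v * v = algebraMap F Q b) :
    LinearMap.ker (LinearMap.mulRight F v + LinearMap.mulLeft F v)
        = Submodule.span F {(1 : Q), v} ∧
    LinearMap.range (LinearMap.mulRight F v + LinearMap.mulLeft F v)
        = Submodule.span F {(1 : Q), v} := by
  have : FiniteDimensional F Q := Module.finite_of_finrank_pos (by omega)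
  have : CharP Q 2 := charP_of_injective_algebraMap (algebraMap F Q).injective 2
  set δ := mulRight F v + mulLeft F v
  have hspan_le : Submodule.span F {1, v} ≤ ker δ := by
    rw [Submodule.span_le]
    rintro x (rfl | rfl) <;> simp [δ, CharTwo.add_self_eq_zero]
  have hrange_le : range δ ≤ ker δ :=
    range_le_ker_iff.2 (mulRight_add_mulLeft_comp_self_eq_zero hvv)
  have hrank : 2 ≤ finrank F (range δ) := by
    have h0 : finrank F (range δ) ≠ 0 := by
      rw [Ne, Submodule.finrank_eq_zero, range_eq_bot]
      exact mulRight_add_mulLeft_ne_zero hv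
    have h1 := finrank_range_ne_one_of_leibniz (by omega) δ (mulRight_add_mulLeft_mul v)
    omega
  have hspan := finrank_span_one_pair_eq_two hv
  have hrn := finrank_range_add_finrank_ker δ
  have hker : ker δ = Submodule.span F {1, v} :=
    (Submodule.eq_of_le_of_finrank_le hspan_le (by omega)).symm
  exact ⟨hker, Submodule.eq_of_le_of_finrank_le (hker ▸ hrange_le) (by omega)⟩

/-- Let `F` be a field of characteristic 2 and `Q` an `F`-quaternion algebra (a central simple
`F`-algebra of dimension 4). If `v ∈ Q \ F` satisfies `v² = b ∈ F^×`, then the `F`-linear map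
`δ : Q → Q`, `x ↦ xv + vx`, has kernel and image both equal to the span of `{1, v}`. -/
theorem kernel_image_of_commutator_map
    (F Q : Type*) [Field F] [CharP F 2] [Ring Q] [Algebra F Q]
    [Algebra.IsCentral F Q] [IsSimpleRing Q]
    (hdim : Module.finrank F Q = 4)
    (v : Q) (hv : v ∉ Set.range (algebraMap F Q))
    (b : F) (hb : b ≠ 0) (hvv : v * v = algebraMap F Q b) :
    LinearMap.ker (LinearMap.mulRight F v + LinearMap.mulLeft F v)
        = Submodule.span F {(1 : Q), v} ∧
    LinearMap.range (LinearMap.mulRight F v + LinearMap.mulLeft F v)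
        = Submodule.span F {(1 : Q), v} :=
  kernel_image_of_commutator_map_general F Q hdim v hv b hvv
end

section
/- Let F be a field, let a, c ∈ F satisfy 1 + 4a ≠ 0 and 1 + 4c ≠ 0, and let b, d ∈ F be nonzero. In the F-algebra B = [a,b) ⊗_F [c,d), where the first factor has quaternion generators i, j (with i² = a + i, j² = b, ij + ji = j) and the second factor has quaternion generators u, v (with u² = c + u, v² = d, uv + vu = v), set i' = i⊗1 + (1 − 2i)⊗u and j' = j⊗1. Then i'·i' = i' + (a + c + 4ac)·(1⊗1), j'·j' = b·(1⊗1), and i'·j' + j'·i' = j'. (That is, i', j' satisfy the defining relations of the quaternion algebra [a + c + 4ac, b).) -/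
/-! The quaternion `F`-algebra `[a,b)`, i.e. the generalized quaternion algebra `ℍ[F; a, 1, b]`:
it has `F`-basis `(1, i, j, k)` with multiplication determined by
`i² = a + i`, `j² = b`, `i·j = k`, `j·i = j - k`. -/
@[ext]
structure QuatAlg (F : Type*) (a b : F) where
  re : F
  imI : F
  imJ : F
  imK : F

namespace QuatAlg

variable {F : Type*} [Field F] {a b : F}

instance : Zero (QuatAlg F a b) := ⟨⟨0, 0, 0, 0⟩⟩
instance : One (QuatAlg F a b) := ⟨⟨1, 0, 0, 0⟩⟩
instance : Add (QuatAlg F a b) :=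
  ⟨fun x y => ⟨x.re + y.re, x.imI + y.imI, x.imJ + y.imJ, x.imK + y.imK⟩⟩
instance : Neg (QuatAlg F a b) := ⟨fun x => ⟨-x.re, -x.imI, -x.imJ, -x.imK⟩⟩
instance : SMul F (QuatAlg F a b) :=
  ⟨fun r x => ⟨r * x.re, r * x.imI, r * x.imJ, r * x.imK⟩⟩

/-- Multiplication in `[a,b)`, determined by the relations
`i² = a + i`, `j² = b`, `ij = k`, `ji = j - k`. -/
instance : Mul (QuatAlg F a b) :=
  ⟨fun x y =>
    ⟨x.re * y.re + a * x.imI * y.imI + b * x.imJ * y.imJ + b * x.imJ * y.imK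
        - a * b * x.imK * y.imK,
      x.re * y.imI + x.imI * y.re + x.imI * y.imI - b * x.imJ * y.imK + b * x.imK * y.imJ,
      x.re * y.imJ + x.imJ * y.re + x.imJ * y.imI + a * x.imI * y.imK - a * x.imK * y.imI,
      x.re * y.imK + x.imK * y.re + x.imI * y.imJ - x.imJ * y.imI + x.imI * y.imK⟩⟩

@[simp] theorem zero_re : (0 : QuatAlg F a b).re = 0 := rfl
@[simp] theorem zero_imI : (0 : QuatAlg F a b).imI = 0 := rfl
@[simp] theorem zero_imJ : (0 : QuatAlg F a b).imJ = 0 := rfl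
@[simp] theorem zero_imK : (0 : QuatAlg F a b).imK = 0 := rfl
@[simp] theorem one_re : (1 : QuatAlg F a b).re = 1 := rfl
@[simp] theorem one_imI : (1 : QuatAlg F a b).imI = 0 := rfl
@[simp] theorem one_imJ : (1 : QuatAlg F a b).imJ = 0 := rfl
@[simp] theorem one_imK : (1 : QuatAlg F a b).imK = 0 := rfl
@[simp] theorem add_re (x y : QuatAlg F a b) : (x + y).re = x.re + y.re := rfl
@[simp] theorem add_imI (x y : QuatAlg F a b) : (x + y).imI = x.imI + y.imI := rfl
@[simp] theorem add_imJ (x y : QuatAlg F a b) : (x + y).imJ = x.imJ + y.imJ := rfl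
@[simp] theorem add_imK (x y : QuatAlg F a b) : (x + y).imK = x.imK + y.imK := rfl
@[simp] theorem neg_re (x : QuatAlg F a b) : (-x).re = -x.re := rfl
@[simp] theorem neg_imI (x : QuatAlg F a b) : (-x).imI = -x.imI := rfl
@[simp] theorem neg_imJ (x : QuatAlg F a b) : (-x).imJ = -x.imJ := rfl
@[simp] theorem neg_imK (x : QuatAlg F a b) : (-x).imK = -x.imK := rfl
@[simp] theorem smul_re (r : F) (x : QuatAlg F a b) : (r • x).re = r * x.re := rfl
@[simp] theorem smul_imI (r : F) (x : QuatAlg F a b) : (r • x).imI = r * x.imI := rfl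
@[simp] theorem smul_imJ (r : F) (x : QuatAlg F a b) : (r • x).imJ = r * x.imJ := rfl
@[simp] theorem smul_imK (r : F) (x : QuatAlg F a b) : (r • x).imK = r * x.imK := rfl
@[simp] theorem mul_re (x y : QuatAlg F a b) :
    (x * y).re = x.re * y.re + a * x.imI * y.imI + b * x.imJ * y.imJ + b * x.imJ * y.imK
        - a * b * x.imK * y.imK := rfl
@[simp] theorem mul_imI (x y : QuatAlg F a b) :
    (x * y).imI
      = x.re * y.imI + x.imI * y.re + x.imI * y.imI - b * x.imJ * y.imK + b * x.imK * y.imJ := rfl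
@[simp] theorem mul_imJ (x y : QuatAlg F a b) :
    (x * y).imJ
      = x.re * y.imJ + x.imJ * y.re + x.imJ * y.imI + a * x.imI * y.imK - a * x.imK * y.imI := rfl
@[simp] theorem mul_imK (x y : QuatAlg F a b) :
    (x * y).imK
      = x.re * y.imK + x.imK * y.re + x.imI * y.imJ - x.imJ * y.imI + x.imI * y.imK := rfl

instance : AddCommGroup (QuatAlg F a b) where
  add_assoc _ _ _ := by ext <;> simp <;> ring
  zero_add _ := by ext <;> simp
  add_zero _ := by ext <;> simp
  add_comm _ _ := by ext <;> simp <;> ring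
  neg_add_cancel _ := by ext <;> simp
  nsmul := nsmulRec
  zsmul := zsmulRec

instance : Ring (QuatAlg F a b) where
  __ := (inferInstance : AddCommGroup (QuatAlg F a b))
  left_distrib _ _ _ := by ext <;> simp <;> ring
  right_distrib _ _ _ := by ext <;> simp <;> ring
  zero_mul _ := by ext <;> simp
  mul_zero _ := by ext <;> simp
  mul_assoc _ _ _ := by ext <;> simp <;> ring
  one_mul _ := by ext <;> simp
  mul_one _ := by ext <;> simp

instance : Algebra F (QuatAlg F a b) where
  smul := (· • ·)
  algebraMap :=
    { toFun r := ⟨r, 0, 0, 0⟩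
      map_one' := rfl
      map_zero' := rfl
      map_mul' _ _ := by ext <;> simp
      map_add' _ _ := by ext <;> simp }
  commutes' _ _ := by ext <;> simp <;> ring
  smul_def' _ _ := by ext <;> simp


theorem algebraMap_def (r : F) : algebraMap F (QuatAlg F a b) r = ⟨r, 0, 0, 0⟩ := rfl
@[simp] theorem algebraMap_re (r : F) : (algebraMap F (QuatAlg F a b) r).re = r := rfl
@[simp] theorem algebraMap_imI (r : F) : (algebraMap F (QuatAlg F a b) r).imI = 0 := rfl
@[simp] theorem algebraMap_imJ (r : F) : (algebraMap F (QuatAlg F a b) r).imJ = 0 := rfl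
@[simp] theorem algebraMap_imK (r : F) : (algebraMap F (QuatAlg F a b) r).imK = 0 := rfl
@[simp] theorem sub_re (x y : QuatAlg F a b) : (x - y).re = x.re - y.re := by
  rw [sub_eq_add_neg, add_re, neg_re, sub_eq_add_neg]
@[simp] theorem sub_imI (x y : QuatAlg F a b) : (x - y).imI = x.imI - y.imI := by
  rw [sub_eq_add_neg, add_imI, neg_imI, sub_eq_add_neg]
@[simp] theorem sub_imJ (x y : QuatAlg F a b) : (x - y).imJ = x.imJ - y.imJ := by
  rw [sub_eq_add_neg, add_imJ, neg_imJ, sub_eq_add_neg]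
@[simp] theorem sub_imK (x y : QuatAlg F a b) : (x - y).imK = x.imK - y.imK := by
  rw [sub_eq_add_neg, add_imK, neg_imK, sub_eq_add_neg]

/-- The generator `i` of `[a,b)`, with `i² = a + i`. -/
def i : QuatAlg F a b := ⟨0, 1, 0, 0⟩

/-- The generator `j` of `[a,b)`, with `j² = b`, `ij + ji = j`. -/
def j : QuatAlg F a b := ⟨0, 0, 1, 0⟩

theorem i_mul_i : (i : QuatAlg F a b) * i = algebraMap F _ a + i := by
  ext <;> simp [i]

theorem j_mul_j : (j : QuatAlg F a b) * j = algebraMap F _ b := by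
  ext <;> simp [j]

theorem i_mul_j_add_j_mul_i : (i : QuatAlg F a b) * j + j * i = j := by
  ext <;> simp [i, j]

/-- The canonical (conjugation) involution `γ` of `[a,b)`, as an `F`-linear map:
`γ(1) = 1`, `γ(i) = 1 - i`, `γ(j) = -j`, `γ(k) = -k`. -/
def conj : QuatAlg F a b →ₗ[F] QuatAlg F a b where
  toFun x := ⟨x.re + x.imI, -x.imI, -x.imJ, -x.imK⟩
  map_add' _ _ := by ext <;> simp <;> ring
  map_smul' _ _ := by ext <;> simp <;> ring

@[simp] theorem conj_i : conj (i : QuatAlg F a b) = 1 - i := by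
  ext <;> simp [conj, i]

@[simp] theorem conj_j : conj (j : QuatAlg F a b) = -j := by
  ext <;> simp [conj, j]

theorem conj_mul (x y : QuatAlg F a b) : conj (x * y) = conj y * conj x := by
  ext <;> simp [conj] <;> ring

theorem conj_conj (x : QuatAlg F a b) : conj (conj x) = x := by
  ext <;> simp [conj]

end QuatAlg

open scoped TensorProduct

section Setup

variable (F : Type*) [Field F] (a b c d : F)

/-- The element `i' = i⊗1 + (1 - 2i)⊗u` of `B = [a,b) ⊗ [c,d)`. -/
noncomputable def iPrime : QuatAlg F a b ⊗[F] QuatAlg F c d :=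
  (QuatAlg.i : QuatAlg F a b) ⊗ₜ[F] (1 : QuatAlg F c d)
    + ((1 : QuatAlg F a b) - 2 * QuatAlg.i) ⊗ₜ[F] (QuatAlg.i : QuatAlg F c d)

/-- The element `j' = j⊗1` of `B = [a,b) ⊗ [c,d)`. -/
noncomputable def jPrime : QuatAlg F a b ⊗[F] QuatAlg F c d :=
  (QuatAlg.j : QuatAlg F a b) ⊗ₜ[F] (1 : QuatAlg F c d)

/-- The element `u' = 1⊗u` of `B = [a,b) ⊗ [c,d)`. -/
noncomputable def uPrime : QuatAlg F a b ⊗[F] QuatAlg F c d :=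
  (1 : QuatAlg F a b) ⊗ₜ[F] (QuatAlg.i : QuatAlg F c d)

/-- The element `v' = j⊗v` of `B = [a,b) ⊗ [c,d)`. -/
noncomputable def vPrime : QuatAlg F a b ⊗[F] QuatAlg F c d :=
  (QuatAlg.j : QuatAlg F a b) ⊗ₜ[F] (QuatAlg.j : QuatAlg F c d)

end Setup

/-! With `e = 1 - 2x`, the relation `x² = α + x` gives `e² = 1 + 4α`, a scalar, and
`xe + ex + e² = e`, while `xw + wx = w` makes `e` anticommute with `w`. Expanding
`(x⊗1 + e⊗y)²` and `(x⊗1 + e⊗y)(w⊗1) + (w⊗1)(x⊗1 + e⊗y)` with these identities gives the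
relations for `i' = i⊗1 + (1 - 2i)⊗u` and `j' = j⊗1`. -/

open TensorProduct Algebra.TensorProduct

section QuadraticElement

variable {R A : Type*} [CommRing R] [Ring A] [Algebra R A] {α : R} {x : A}

theorem one_sub_two_mul_mul_self (hx : x * x = algebraMap R A α + x) :
    (1 - 2 * x) * (1 - 2 * x) = algebraMap R A (1 + 4 * α) := by
  calc (1 - 2 * x) * (1 - 2 * x) = 1 - 4 * x + 4 * (x * x) := by noncomm_ring
    _ = algebraMap R A (1 + 4 * α) := by
      rw [hx, map_add, map_mul, map_one, map_ofNat]; noncomm_ring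

theorem mul_one_sub_two_mul_add_one_sub_two_mul_mul (hx : x * x = algebraMap R A α + x) :
    x * (1 - 2 * x) + (1 - 2 * x) * x = 1 - 2 * x - algebraMap R A (1 + 4 * α) := by
  calc x * (1 - 2 * x) + (1 - 2 * x) * x = 2 * x - 4 * (x * x) := by noncomm_ring
    _ = 1 - 2 * x - algebraMap R A (1 + 4 * α) := by
      rw [hx, map_add, map_mul, map_one, map_ofNat]; noncomm_ring

theorem one_sub_two_mul_mul_add_mul_one_sub_two_mul {w : A} (hw : x * w + w * x = w) :
    (1 - 2 * x) * w + w * (1 - 2 * x) = 0 := by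
  calc (1 - 2 * x) * w + w * (1 - 2 * x) = 2 * w - 2 * (x * w + w * x) := by noncomm_ring
    _ = 0 := by rw [hw, sub_self]

variable {B : Type*} [Ring B] [Algebra R B]

theorem tmul_one_add_one_sub_two_mul_tmul_mul_self {β : R} {y : B}
    (hx : x * x = algebraMap R A α + x) (hy : y * y = algebraMap R B β + y) :
    (x ⊗ₜ[R] (1 : B) + (1 - 2 * x) ⊗ₜ[R] y) * (x ⊗ₜ[R] (1 : B) + (1 - 2 * x) ⊗ₜ[R] y)
      = x ⊗ₜ[R] (1 : B) + (1 - 2 * x) ⊗ₜ[R] y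
        + algebraMap R (A ⊗[R] B) (α + β + 4 * α * β) := by
  calc _ = (x * x) ⊗ₜ[R] (1 : B) + (x * (1 - 2 * x) + (1 - 2 * x) * x) ⊗ₜ[R] y
          + ((1 - 2 * x) * (1 - 2 * x)) ⊗ₜ[R] (y * y) := by
        simp only [add_mul, mul_add, tmul_mul_tmul, one_mul, mul_one, add_tmul]; abel
    _ = (algebraMap R A α + x) ⊗ₜ[R] (1 : B) + (1 - 2 * x - algebraMap R A (1 + 4 * α)) ⊗ₜ[R] y
          + algebraMap R A (1 + 4 * α) ⊗ₜ[R] (algebraMap R B β + y) := by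
        rw [hx, hy, mul_one_sub_two_mul_add_one_sub_two_mul_mul hx, one_sub_two_mul_mul_self hx]
    _ = _ := by
        simp only [Algebra.algebraMap_eq_smul_one, add_tmul, sub_tmul, tmul_add, ← smul_tmul',
          tmul_smul, one_def]
        module

theorem tmul_one_add_one_sub_two_mul_tmul_anticomm {w : A} (hw : x * w + w * x = w) (y : B) :
    (x ⊗ₜ[R] (1 : B) + (1 - 2 * x) ⊗ₜ[R] y) * (w ⊗ₜ[R] (1 : B))
      + (w ⊗ₜ[R] (1 : B)) * (x ⊗ₜ[R] (1 : B) + (1 - 2 * x) ⊗ₜ[R] y) = w ⊗ₜ[R] (1 : B) := by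
  calc _ = (x * w + w * x) ⊗ₜ[R] (1 : B) + ((1 - 2 * x) * w + w * (1 - 2 * x)) ⊗ₜ[R] y := by
        simp only [add_mul, mul_add, tmul_mul_tmul, one_mul, mul_one, add_tmul]; abel
    _ = w ⊗ₜ[R] (1 : B) := by
      rw [hw, one_sub_two_mul_mul_add_mul_one_sub_two_mul hw, zero_tmul, add_zero]

end QuadraticElement

theorem iPrime_jPrime_relations_general
    (F : Type*) [Field F] (a b c d : F) :
    iPrime F a b c d * iPrime F a b c d
        = iPrime F a b c d + algebraMap F (QuatAlg F a b ⊗[F] QuatAlg F c d) (a + c + 4 * a * c) ∧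
    jPrime F a b c d * jPrime F a b c d
        = algebraMap F (QuatAlg F a b ⊗[F] QuatAlg F c d) b ∧
    iPrime F a b c d * jPrime F a b c d + jPrime F a b c d * iPrime F a b c d
        = jPrime F a b c d :=
  ⟨tmul_one_add_one_sub_two_mul_tmul_mul_self QuatAlg.i_mul_i QuatAlg.i_mul_i,
    by rw [jPrime, tmul_mul_tmul, QuatAlg.j_mul_j, one_mul,
      Algebra.TensorProduct.algebraMap_apply],
    tmul_one_add_one_sub_two_mul_tmul_anticomm QuatAlg.i_mul_j_add_j_mul_i _⟩

/-- In `B = [a,b) ⊗ [c,d)`, the elements `i' = i⊗1 + (1-2i)⊗u` and `j' = j⊗1` satisfy the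
defining relations of the quaternion algebra `[a + c + 4ac, b)`. -/
theorem iPrime_jPrime_relations
    (F : Type*) [Field F] (a b c d : F)
    (ha : 1 + 4 * a ≠ 0) (hc : 1 + 4 * c ≠ 0) (hb : b ≠ 0) (hd : d ≠ 0) :
    iPrime F a b c d * iPrime F a b c d
        = iPrime F a b c d + algebraMap F (QuatAlg F a b ⊗[F] QuatAlg F c d) (a + c + 4 * a * c) ∧
    jPrime F a b c d * jPrime F a b c d
        = algebraMap F (QuatAlg F a b ⊗[F] QuatAlg F c d) b ∧
    iPrime F a b c d * jPrime F a b c d + jPrime F a b c d * iPrime F a b c d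
        = jPrime F a b c d :=
  iPrime_jPrime_relations_general F a b c d
end

section
/- Let F be a field, let a, c ∈ F satisfy 1 + 4a ≠ 0 and 1 + 4c ≠ 0, and let b, d ∈ F be nonzero. In the F-algebra B = [a,b) ⊗_F [c,d), where the first factor has quaternion generators i, j (with i² = a + i, j² = b, ij + ji = j) and the second factor has quaternion generators u, v (with u² = c + u, v² = d, uv + vu = v), set u' = 1⊗u and v' = j⊗v. Then u'·u' = u' + c·(1⊗1), v'·v' = (b·d)·(1⊗1), and u'·v' + v'·u' = v'. (That is, u', v' satisfy the defining relations of the quaternion algebra [c, bd).) -/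
open scoped TensorProduct

namespace Algebra.TensorProduct

variable {R A B : Type*} [CommSemiring R] [Semiring A] [Semiring B] [Algebra R A] [Algebra R B]

theorem algebraMap_tmul_algebraMap (r s : R) :
    algebraMap R A r ⊗ₜ[R] algebraMap R B s = algebraMap R (A ⊗[R] B) (r * s) := by
  rw [map_mul, algebraMap_apply, algebraMap_apply', tmul_mul_tmul, mul_one, one_mul]

theorem one_tmul_mul_add_mul_one_tmul (x : A) (y z : B) :
    (1 ⊗ₜ[R] y) * (x ⊗ₜ[R] z) + (x ⊗ₜ[R] z) * (1 ⊗ₜ[R] y) = x ⊗ₜ[R] (y * z + z * y) := by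
  rw [tmul_mul_tmul, tmul_mul_tmul, one_mul, mul_one, TensorProduct.tmul_add]

end Algebra.TensorProduct

open Algebra.TensorProduct

section Relations

variable {F : Type*} [Field F] {a b c d : F}

theorem uPrime_eq_includeRight_i :
    uPrime F a b c d = includeRight (QuatAlg.i : QuatAlg F c d) :=
  rfl

theorem uPrime_mul_uPrime :
    uPrime F a b c d * uPrime F a b c d
      = uPrime F a b c d + algebraMap F (QuatAlg F a b ⊗[F] QuatAlg F c d) c := by
  rw [uPrime_eq_includeRight_i, ← map_mul, QuatAlg.i_mul_i, map_add, AlgHom.commutes, add_comm]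

theorem vPrime_mul_vPrime :
    vPrime F a b c d * vPrime F a b c d
      = algebraMap F (QuatAlg F a b ⊗[F] QuatAlg F c d) (b * d) := by
  rw [vPrime, tmul_mul_tmul, QuatAlg.j_mul_j, QuatAlg.j_mul_j, algebraMap_tmul_algebraMap]

theorem uPrime_mul_vPrime_add_vPrime_mul_uPrime :
    uPrime F a b c d * vPrime F a b c d + vPrime F a b c d * uPrime F a b c d
      = vPrime F a b c d := by
  rw [uPrime, vPrime, one_tmul_mul_add_mul_one_tmul, QuatAlg.i_mul_j_add_j_mul_i]

end Relations

theorem uPrime_vPrime_relations_general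
    (F : Type*) [Field F] (a b c d : F) :
    uPrime F a b c d * uPrime F a b c d
        = uPrime F a b c d + algebraMap F (QuatAlg F a b ⊗[F] QuatAlg F c d) c ∧
    vPrime F a b c d * vPrime F a b c d
        = algebraMap F (QuatAlg F a b ⊗[F] QuatAlg F c d) (b * d) ∧
    uPrime F a b c d * vPrime F a b c d + vPrime F a b c d * uPrime F a b c d
        = vPrime F a b c d :=
  ⟨uPrime_mul_uPrime, vPrime_mul_vPrime, uPrime_mul_vPrime_add_vPrime_mul_uPrime⟩

/-- In `B = [a,b) ⊗ [c,d)`, the elements `u' = 1⊗u` and `v' = j⊗v` satisfy the defining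
relations of the quaternion algebra `[c, bd)`. -/
theorem uPrime_vPrime_relations
    (F : Type*) [Field F] (a b c d : F)
    (ha : 1 + 4 * a ≠ 0) (hc : 1 + 4 * c ≠ 0) (hb : b ≠ 0) (hd : d ≠ 0) :
    uPrime F a b c d * uPrime F a b c d
        = uPrime F a b c d + algebraMap F (QuatAlg F a b ⊗[F] QuatAlg F c d) c ∧
    vPrime F a b c d * vPrime F a b c d
        = algebraMap F (QuatAlg F a b ⊗[F] QuatAlg F c d) (b * d) ∧
    uPrime F a b c d * vPrime F a b c d + vPrime F a b c d * uPrime F a b c d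
        = vPrime F a b c d :=
  uPrime_vPrime_relations_general F a b c d
end

section
/- Let F be a field, let a, c ∈ F satisfy 1 + 4a ≠ 0 and 1 + 4c ≠ 0, and let b, d ∈ F be nonzero. In the F-algebra B = [a,b) ⊗_F [c,d), where the first factor has quaternion generators i, j (with i² = a + i, j² = b, ij + ji = j) and the second factor has quaternion generators u, v (with u² = c + u, v² = d, uv + vu = v), set i' = i⊗1 + (1 − 2i)⊗u, j' = j⊗1, u' = 1⊗u, v' = j⊗v. Then each of i', j' commutes with each of u', v'; that is, i'u' = u'i', i'v' = v'i', j'u' = u'j', and j'v' = v'j'. -/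
open scoped TensorProduct

/-! From `i j + j i = j` one gets that `1 - 2i` anticommutes with `j`, and likewise `u v + v u = v`
in the second factor. Expanding `i' v'` and `v' i'`, the two sign changes cancel; the other three
commutations hold factorwise. -/

section AnticommuteRelation

variable {A : Type*} [Ring A] {x y : A}

theorem mul_one_sub_two_mul_eq_neg_of_mul_add_mul_eq (h : x * y + y * x = y) :
    y * (1 - 2 * x) = -((1 - 2 * x) * y) := by
  rw [two_mul, mul_sub, mul_one, mul_add, eq_sub_of_add_eq' h]
  noncomm_ring

theorem mul_comm_eq_of_mul_add_mul_eq (h : x * y + y * x = y) :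
    y * x = x * y + (1 - 2 * x) * y := by
  rw [eq_sub_of_add_eq' h]
  noncomm_ring

end AnticommuteRelation

open TensorProduct in
theorem commute_tmul_one_add_tmul_of_mul_add_mul_eq {R A B : Type*} [CommRing R] [Ring A]
    [Ring B] [Algebra R A] [Algebra R B] {i j : A} {u v : B}
    (hA : i * j + j * i = j) (hB : u * v + v * u = v) :
    Commute (i ⊗ₜ[R] (1 : B) + (1 - 2 * i) ⊗ₜ[R] u) (j ⊗ₜ[R] v) := by
  calc (i ⊗ₜ[R] (1 : B) + (1 - 2 * i) ⊗ₜ[R] u) * (j ⊗ₜ[R] v)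
      = (i * j) ⊗ₜ[R] v + ((1 - 2 * i) * j) ⊗ₜ[R] (u * v) := by
        simp only [add_mul, Algebra.TensorProduct.tmul_mul_tmul, one_mul]
    _ = (i * j + (1 - 2 * i) * j) ⊗ₜ[R] v + (-((1 - 2 * i) * j)) ⊗ₜ[R] (v * u) := by
        rw [eq_sub_of_add_eq hB, tmul_sub, add_tmul, neg_tmul]
        abel
    _ = (j ⊗ₜ[R] v) * (i ⊗ₜ[R] (1 : B) + (1 - 2 * i) ⊗ₜ[R] u) := by
        rw [← mul_comm_eq_of_mul_add_mul_eq hA, ← mul_one_sub_two_mul_eq_neg_of_mul_add_mul_eq hA]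
        simp only [mul_add, Algebra.TensorProduct.tmul_mul_tmul, mul_one]

theorem primes_commute_general
    (F : Type*) [Field F] (a b c d : F) :
    iPrime F a b c d * uPrime F a b c d = uPrime F a b c d * iPrime F a b c d ∧
    iPrime F a b c d * vPrime F a b c d = vPrime F a b c d * iPrime F a b c d ∧
    jPrime F a b c d * uPrime F a b c d = uPrime F a b c d * jPrime F a b c d ∧
    jPrime F a b c d * vPrime F a b c d = vPrime F a b c d * jPrime F a b c d := by
  refine ⟨?_, ?_, ?_, ?_⟩
  · exact (((Commute.one_right _).tmul (Commute.one_left _)).add_left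
      ((Commute.one_right _).tmul (Commute.refl _))).eq
  · exact (commute_tmul_one_add_tmul_of_mul_add_mul_eq QuatAlg.i_mul_j_add_j_mul_i
      QuatAlg.i_mul_j_add_j_mul_i).eq
  · exact ((Commute.one_right _).tmul (Commute.one_left _)).eq
  · exact ((Commute.refl _).tmul (Commute.one_left _)).eq

/-- In `B = [a,b) ⊗ [c,d)`, each of `i' = i⊗1 + (1-2i)⊗u`, `j' = j⊗1` commutes with each of
`u' = 1⊗u`, `v' = j⊗v`. -/
theorem primes_commute
    (F : Type*) [Field F] (a b c d : F)
    (ha : 1 + 4 * a ≠ 0) (hc : 1 + 4 * c ≠ 0) (hb : b ≠ 0) (hd : d ≠ 0) :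
    iPrime F a b c d * uPrime F a b c d = uPrime F a b c d * iPrime F a b c d ∧
    iPrime F a b c d * vPrime F a b c d = vPrime F a b c d * iPrime F a b c d ∧
    jPrime F a b c d * uPrime F a b c d = uPrime F a b c d * jPrime F a b c d ∧
    jPrime F a b c d * vPrime F a b c d = vPrime F a b c d * jPrime F a b c d :=
  primes_commute_general F a b c d
end

section
/- Let F be a field, let a, c ∈ F satisfy 1 + 4a ≠ 0 and 1 + 4c ≠ 0, and let b, d ∈ F be nonzero. In the F-algebra B = [a,b) ⊗_F [c,d), where the first factor has quaternion generators i, j and the second factor has generators u, v, let σ = γ⊗γ be the F-linear map on B induced by the canonical involutions of the two factors (so σ(x⊗y) = γ(x)⊗γ(y), where γ(i) = 1 − i, γ(j) = −j, γ(u) = 1 − u, γ(v) = −v, γ fixes scalars). Set i' = i⊗1 + (1 − 2i)⊗u, j' = j⊗1, u' = 1⊗u, v' = j⊗v. Then σ(i') = i', σ(j') = −j', σ(u') = 1⊗1 − u', and σ(v') = v'. -/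
open scoped TensorProduct

/-- The involution `σ = γ⊗γ` on `B = [a,b) ⊗ [c,d)` induced by the canonical involutions
of the two factors, as an `F`-linear map (`σ(x⊗y) = γ(x)⊗γ(y)`). -/
noncomputable def sigmaTensor (F : Type*) [Field F] (a b c d : F) :
    QuatAlg F a b ⊗[F] QuatAlg F c d →ₗ[F] QuatAlg F a b ⊗[F] QuatAlg F c d :=
  TensorProduct.map QuatAlg.conj QuatAlg.conj

namespace QuatAlg

variable {F : Type*} [Field F] {a b : F}

@[simp] theorem conj_one : conj (1 : QuatAlg F a b) = 1 := by
  ext <;> simp [conj]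

theorem conj_one_sub_two_mul_i : conj (1 - 2 * i : QuatAlg F a b) = -(1 - 2 * i) := by
  rw [map_sub, two_mul, map_add, conj_one, conj_i]
  noncomm_ring

end QuatAlg

open QuatAlg TensorProduct

theorem sigmaTensor_tmul (F : Type*) [Field F] (a b c d : F) (x : QuatAlg F a b)
    (y : QuatAlg F c d) :
    sigmaTensor F a b c d (x ⊗ₜ y) = conj x ⊗ₜ conj y :=
  map_tmul _ _ _ _

theorem sigma_on_primes_general
    (F : Type*) [Field F] (a b c d : F) :
    sigmaTensor F a b c d (iPrime F a b c d) = iPrime F a b c d ∧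
    sigmaTensor F a b c d (jPrime F a b c d) = -jPrime F a b c d ∧
    sigmaTensor F a b c d (uPrime F a b c d)
      = (1 : QuatAlg F a b) ⊗ₜ[F] (1 : QuatAlg F c d) - uPrime F a b c d ∧
    sigmaTensor F a b c d (vPrime F a b c d) = vPrime F a b c d := by
  refine ⟨?_, ?_, ?_, ?_⟩
  · have h_one_sub_i : (1 - i : QuatAlg F a b) = i + (1 - 2 * i) := by noncomm_ring
    rw [iPrime, map_add, sigmaTensor_tmul, sigmaTensor_tmul, conj_i, conj_one,
      conj_one_sub_two_mul_i, conj_i, h_one_sub_i, add_tmul, neg_tmul, tmul_sub]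
    abel
  · rw [jPrime, sigmaTensor_tmul, conj_j, conj_one, neg_tmul]
  · rw [uPrime, sigmaTensor_tmul, conj_one, conj_i, tmul_sub]
  · rw [vPrime, sigmaTensor_tmul, conj_j, conj_j, neg_tmul, tmul_neg, neg_neg]

/-- The involution `σ = γ⊗γ` on `B = [a,b) ⊗ [c,d)` satisfies `σ(i') = i'`, `σ(j') = -j'`,
`σ(u') = 1⊗1 - u'` and `σ(v') = v'`. -/
theorem sigma_on_primes
    (F : Type*) [Field F] (a b c d : F)
    (ha : 1 + 4 * a ≠ 0) (hc : 1 + 4 * c ≠ 0) (hb : b ≠ 0) (hd : d ≠ 0) :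
    sigmaTensor F a b c d (iPrime F a b c d) = iPrime F a b c d ∧
    sigmaTensor F a b c d (jPrime F a b c d) = -jPrime F a b c d ∧
    sigmaTensor F a b c d (uPrime F a b c d)
      = (1 : QuatAlg F a b) ⊗ₜ[F] (1 : QuatAlg F c d) - uPrime F a b c d ∧
    sigmaTensor F a b c d (vPrime F a b c d) = vPrime F a b c d :=
  sigma_on_primes_general F a b c d
end
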